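/- Let μ_on, μ_off > 0 and d ≥ 0. Then e^{-μ_on·d} + ∫_{t=0}^{d} (μ_on·μ_off/(μ_on+μ_off))·(1 - e^{-(μ_on+μ_off)t})·e^{-μ_on(d-t)} dt = (μ_off + μ_on·e^{-(μ_on+μ_off)d})/(μ_on+μ_off). (This establishes the paper's closed form α_11 for the probability that the PNP is ON at both endpoints of a slot: either a single ON period covers the slot, or some ON-OFF pairs of total duration t are followed by an ON period covering the remaining time d - t.) -/

import Mathlib

open Real intervalIntegral

theorem integral_exp_mul {c : ℝ} (hc : c ≠ 0) (a b : ℝ) :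
    ∫ x in a..b, exp (c * x) = (exp (c * b) - exp (c * a)) / c := by
  rw [integral_comp_mul_left (fun x => exp x) hc, integral_exp, smul_eq_mul, inv_mul_eq_div]

theorem alpha_one_one_closed_form_general
    (μon μoff d : ℝ) (hon : 0 < μon) (hoff : 0 < μoff) :
    Real.exp (-μon * d) +
      ∫ t in (0:ℝ)..d,
        (μon * μoff / (μon + μoff)) * (1 - Real.exp (-(μon + μoff) * t)) *
          Real.exp (-μon * (d - t))
    = (μoff + μon * Real.exp (-(μon + μoff) * d)) / (μon + μoff) := by
  have integrand_eq : ∀ k t : ℝ, k * (1 - exp (-(μon + μoff) * t)) * exp (-μon * (d - t)) =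
      k * exp (-μon * d) * (exp (μon * t) - exp (-μoff * t)) := fun k t => by
    rw [mul_assoc, mul_assoc, sub_mul, one_mul, mul_sub (exp _), ← exp_add, ← exp_add,
      ← exp_add]
    congr 3 <;> ring
  have exp_split : exp (-(μon + μoff) * d) = exp (-μon * d) * exp (-μoff * d) := by
    rw [← exp_add]; ring_nf
  have exp_cancel : exp (-μon * d) * exp (μon * d) = 1 := by
    rw [← exp_add, neg_mul, neg_add_cancel, exp_zero]
  simp_rw [integrand_eq]
  rw [integral_const_mul, integral_sub, integral_exp_mul hon.ne',
    integral_exp_mul (neg_ne_zero.mpr hoff.ne')]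
  · rw [mul_zero, mul_zero, exp_zero, exp_split]
    -- otherwise `field_simp` rewrites `-μon * d` to `-(μon * d)` and `exp_cancel` no longer matches
    generalize exp (-μon * d) = E at exp_cancel ⊢
    field_simp
    linear_combination μoff * exp_cancel
  all_goals exact (continuous_exp.comp (continuous_const.mul continuous_id)).intervalIntegrable _ _

/-- Closed form for `α_11`: the probability that the PNP is ON at both endpoints of a
slot of duration `d` is the probability `e^{-μon d}` that a single ON period covers the
slot plus the renewal integral, and this equals
`(μoff + μon e^{-(μon+μoff) d})/(μon+μoff)`. -/
theorem alpha_one_one_closed_form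
    (μon μoff d : ℝ) (hon : 0 < μon) (hoff : 0 < μoff) (hd : 0 ≤ d) :
    Real.exp (-μon * d) +
      ∫ t in (0:ℝ)..d,
        (μon * μoff / (μon + μoff)) * (1 - Real.exp (-(μon + μoff) * t)) *
          Real.exp (-μon * (d - t))
    = (μoff + μon * Real.exp (-(μon + μoff) * d)) / (μon + μoff) :=
  alpha_one_one_closed_form_general μon μoff d hon hoff
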